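/- arXiv:1411.2964 — 2 statements merged into one kernel-verified Lean document; each statement's English description precedes it below -/
import Mathlib

section
/- For every $\lambda>0$, $m>0$, and $t\in\mathbb{R}$, $\int_\lambda^\infty (4\pi s)^{-1/2} e^{-t^2/(4s)-s m^2}\,ds = e^{-\lambda m^2}(4\pi\lambda)^{-1/2}(2m)^{-1} W_{\lambda,m}(t)$, where $W_{\lambda,m}(t)=\int_{\mathbb{R}} e^{-(t-u)^2/(4\lambda)-m|u|}\,du$. (Equivalently, the kernel of $e^{-\lambda(-\Delta+m^2)}C$ in one dimension equals the heat-smoothed exponential kernel.) -/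
/-!
With the heat kernel `p_s(x) = (4πs)^{-1/2} e^{-x²/(4s)}`, put `s = λ + r` and use the semigroup
property `p_{λ+r} = p_λ ∗ p_r` (completing the square in a Gaussian integral). After Fubini the
`r`-integral is the Laplace transform `∫₀^∞ p_r(u) e^{-r m²} dr = e^{-m|u|} / (2m)`; the
substitution `r = y²` turns it into `∫₀^∞ e^{-(m y - |u|/(2y))²} dy`, which the Cauchy–Schlömilch
transformation evaluates to `√π / (2m)`.
-/

open MeasureTheory Real Set

lemma rpow_neg_one_div_two_eq_inv_sqrt {a : ℝ} (ha : 0 ≤ a) : a ^ (-(1:ℝ)/2) = (√a)⁻¹ := by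
  rw [neg_div, rpow_neg ha, sqrt_eq_rpow]

section CauchySchlomilch

variable {E : Type*} [NormedAddCommGroup E] [NormedSpace ℝ E] {p q : ℝ}

lemma hasDerivAt_mul_sub_div {y : ℝ} (hy : y ≠ 0) :
    HasDerivAt (fun y => p * y - q / y) (p + q / y ^ 2) y := by
  simp only [div_eq_mul_inv]
  exact (((hasDerivAt_id' y).const_mul p).sub ((hasDerivAt_inv hy).const_mul q)).congr_deriv
    (by ring)

lemma strictMonoOn_mul_sub_div (hp : 0 < p) (hq : 0 < q) :
    StrictMonoOn (fun y => p * y - q / y) (Ioi 0) := by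
  intro x hx y _ hxy
  have : q / y < q / x := div_lt_div_of_pos_left hq hx hxy
  dsimp only
  nlinarith

lemma image_mul_sub_div_Ioi (hp : 0 < p) (hq : 0 < q) :
    (fun y => p * y - q / y) '' Ioi 0 = univ := by
  refine eq_univ_of_forall fun v => ?_
  -- the positive root of `p y² - v y - q = 0`
  set s := √(v ^ 2 + 4 * p * q)
  have hs : s ^ 2 = v ^ 2 + 4 * p * q := sq_sqrt (by positivity)
  have hvs : 0 < v + s := by
    have : |v| < s := by
      rw [← sqrt_sq_eq_abs]
      exact sqrt_lt_sqrt (sq_nonneg v) (by nlinarith)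
    linarith [neg_le_abs v]
  refine ⟨(v + s) / (2 * p), mem_Ioi.mpr (by positivity), ?_⟩
  field_simp
  nlinarith

/-- The substitution `y ↦ q / (p y)` turns `p y - q / y` into its negative. -/
lemma integral_Ioi_div_sq_smul_comp_mul_sub_div (hp : 0 < p) (hq : 0 < q) (g : ℝ → E) :
    ∫ y in Ioi 0, (q / y ^ 2) • g (p * y - q / y) = p • ∫ y in Ioi 0, g (q / y - p * y) := by
  have hderiv : ∀ y ∈ Ioi (0:ℝ),
      HasDerivWithinAt (fun y => q / (p * y)) (-(q / (p * y ^ 2))) (Ioi 0) y := by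
    intro y hy
    have h := ((hasDerivAt_inv (ne_of_gt hy)).const_mul (q / p)).congr_deriv
      (show q / p * -(y ^ 2)⁻¹ = -(q / (p * y ^ 2)) by field_simp)
    exact (h.congr_of_eventuallyEq (.of_forall fun z => by ring)).hasDerivWithinAt
  have hinj : InjOn (fun y => q / (p * y)) (Ioi 0) := fun x hx y hy hxy => by
    have : (0:ℝ) < x := hx
    have : (0:ℝ) < y := hy
    field_simp at hxy
    nlinarith
  have himage : (fun y => q / (p * y)) '' Ioi 0 = Ioi 0 := by
    refine Subset.antisymm (image_subset_iff.mpr fun y (hy : 0 < y) => by simp; positivity)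
      fun y (hy : 0 < y) => ⟨q / (p * y), by simp; positivity, by field_simp⟩
  conv_lhs => rw [← himage, integral_image_eq_integral_abs_deriv_smul measurableSet_Ioi hderiv hinj]
  rw [← integral_smul]
  refine setIntegral_congr_fun measurableSet_Ioi fun y (hy : 0 < y) => ?_
  have h1 : p * (q / (p * y)) - q / (q / (p * y)) = q / y - p * y := by field_simp
  rw [h1, smul_smul, abs_neg, abs_of_pos (by positivity)]
  congr 1
  field_simp

lemma integrableOn_Ioi_smul_comp_mul_sub_div {f : ℝ → E} (hf : Integrable f) (hp : 0 < p)
    (hq : 0 < q) : IntegrableOn (fun y => (p + q / y ^ 2) • f (p * y - q / y)) (Ioi 0) := by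
  have h := hf.integrableOn (s := (fun y => p * y - q / y) '' Ioi 0)
  rw [integrableOn_image_iff_integrableOn_abs_deriv_smul measurableSet_Ioi
    (fun y hy => (hasDerivAt_mul_sub_div (ne_of_gt hy)).hasDerivWithinAt)
    (strictMonoOn_mul_sub_div hp hq).injOn] at h
  refine h.congr_fun (fun y (hy : 0 < y) => ?_) measurableSet_Ioi
  simp only [abs_of_pos (by positivity : 0 < p + q / y ^ 2)]

lemma integrableOn_Ioi_comp_mul_sub_div {f : ℝ → E} (hf : Integrable f) (hp : 0 < p)
    (hq : 0 < q) : IntegrableOn (fun y => f (p * y - q / y)) (Ioi 0) := by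
  have hmeas : Measurable fun y : ℝ => (p + q / y ^ 2)⁻¹ := by fun_prop
  refine IntegrableOn.congr_fun ((integrableOn_Ioi_smul_comp_mul_sub_div hf hp hq).bdd_smul p⁻¹
    hmeas.aestronglyMeasurable
    (ae_restrict_of_forall_mem measurableSet_Ioi fun y (hy : 0 < y) => ?_))
    (fun y (hy : 0 < y) => ?_) measurableSet_Ioi
  · rw [norm_inv, Real.norm_of_nonneg (by positivity)]
    exact inv_anti₀ hp (by simp only [le_add_iff_nonneg_right]; positivity)
  · simp only [Pi.smul_apply', smul_smul, inv_mul_cancel₀ (by positivity : p + q / y ^ 2 ≠ 0),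
      one_smul]

/-- The Cauchy–Schlömilch transformation. -/
theorem integral_Ioi_comp_mul_sub_div {f : ℝ → E} (hf : Integrable f) (hf_even : Function.Even f)
    (hp : 0 < p) (hq : 0 < q) :
    ∫ y in Ioi 0, f (p * y - q / y) = (2 * p)⁻¹ • ∫ x, f x := by
  have hint₁ := integrableOn_Ioi_comp_mul_sub_div hf hp hq
  have hint₂ : IntegrableOn (fun y => (q / y ^ 2) • f (p * y - q / y)) (Ioi 0) :=
    ((integrableOn_Ioi_smul_comp_mul_sub_div hf hp hq).sub (hint₁.smul p)).congr_fun
      (fun y _ => by simp only [Pi.sub_apply, Pi.smul_apply, add_smul, add_sub_cancel_left])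
      measurableSet_Ioi
  have hreflect : ∫ y in Ioi 0, (q / y ^ 2) • f (p * y - q / y)
      = p • ∫ y in Ioi 0, f (p * y - q / y) := by
    rw [integral_Ioi_div_sq_smul_comp_mul_sub_div hp hq f]
    refine congrArg _ (setIntegral_congr_fun measurableSet_Ioi fun y _ => ?_)
    rw [← neg_sub, hf_even]
  have hsplit : ∫ x, f x = p • (∫ y in Ioi 0, f (p * y - q / y))
      + ∫ y in Ioi 0, (q / y ^ 2) • f (p * y - q / y) :=
    calc ∫ x, f x = ∫ y in Ioi 0, |p + q / y ^ 2| • f (p * y - q / y) := by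
          rw [← setIntegral_univ, ← image_mul_sub_div_Ioi hp hq,
            integral_image_eq_integral_abs_deriv_smul measurableSet_Ioi
              (fun y hy => (hasDerivAt_mul_sub_div (ne_of_gt hy)).hasDerivWithinAt)
              (strictMonoOn_mul_sub_div hp hq).injOn]
      _ = ∫ y in Ioi 0, (p • f (p * y - q / y) + (q / y ^ 2) • f (p * y - q / y)) :=
          setIntegral_congr_fun measurableSet_Ioi fun y (hy : 0 < y) => by
            rw [abs_of_pos (by positivity), add_smul]
      _ = _ := by
          rw [integral_add (f := fun y => p • f (p * y - q / y)) (hint₁.smul p) hint₂,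
            integral_smul]
  rw [hsplit, hreflect, ← add_smul, smul_smul, ← two_mul, inv_mul_cancel₀ (by positivity),
    one_smul]

lemma integral_Ioi_exp_neg_sq_mul_sub_div (hp : 0 < p) (hq : 0 ≤ q) :
    ∫ y in Ioi 0, exp (-(p * y - q / y) ^ 2) = √π / (2 * p) := by
  rcases hq.eq_or_lt with rfl | hq
  · simp_rw [zero_div, sub_zero, mul_pow, ← neg_mul]
    rw [integral_gaussian_Ioi, sqrt_div pi_pos.le, sqrt_sq hp.le]
    ring
  · have hf : Integrable fun x : ℝ => exp (-x ^ 2) := by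
      simpa using integrable_exp_neg_mul_sq one_pos
    rw [integral_Ioi_comp_mul_sub_div hf (fun x => by rw [neg_sq]) hp hq, smul_eq_mul]
    simpa [div_eq_inv_mul] using congrArg ((2 * p)⁻¹ * ·) (integral_gaussian 1)

end CauchySchlomilch

noncomputable def heatKernel (s x : ℝ) : ℝ :=
  (4 * π * s) ^ (-(1:ℝ)/2) * exp (-x ^ 2 / (4 * s))

namespace heatKernel

lemma nonneg {s : ℝ} (hs : 0 ≤ s) (x : ℝ) : 0 ≤ heatKernel s x := by
  unfold heatKernel; positivity

lemma le_rpow_of_le {a s : ℝ} (ha : 0 < a) (has : a ≤ s) (x : ℝ) :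
    heatKernel s x ≤ (4 * π * a) ^ (-(1:ℝ)/2) := by
  have hexp : exp (-x ^ 2 / (4 * s)) ≤ 1 :=
    exp_le_one_iff.mpr (div_nonpos_of_nonpos_of_nonneg (by nlinarith [sq_nonneg x]) (by linarith))
  have hs : 0 < s := ha.trans_le has
  calc heatKernel s x ≤ (4 * π * s) ^ (-(1:ℝ)/2) :=
        mul_le_of_le_one_right (by positivity) hexp
    _ ≤ (4 * π * a) ^ (-(1:ℝ)/2) :=
        rpow_le_rpow_of_nonpos (by positivity) (by gcongr) (by norm_num)

lemma integrable {s : ℝ} (hs : 0 < s) : Integrable (heatKernel s) := by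
  have h := (integrable_exp_neg_mul_sq (show 0 < 1 / (4 * s) by positivity)).const_mul
    ((4 * π * s) ^ (-(1:ℝ)/2))
  refine h.congr (ae_of_all _ fun x => ?_)
  simp only [heatKernel]
  ring_nf

lemma mul_heatKernel_eq {a b : ℝ} (ha : 0 < a) (hb : 0 < b) (t u : ℝ) :
    heatKernel a (t - u) * heatKernel b u = (4 * π * a) ^ (-(1:ℝ)/2) * (4 * π * b) ^ (-(1:ℝ)/2)
      * exp (-t ^ 2 / (4 * (a + b)))
      * exp (-((a + b) / (4 * a * b)) * (u - b * t / (a + b)) ^ 2) := by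
  simp only [heatKernel]
  rw [mul_mul_mul_comm, ← exp_add, mul_assoc (_ * _), ← exp_add]
  congr 2
  field_simp
  ring

theorem integral_mul_heatKernel {a b : ℝ} (ha : 0 < a) (hb : 0 < b) (t : ℝ) :
    ∫ u, heatKernel a (t - u) * heatKernel b u = heatKernel (a + b) t := by
  simp_rw [mul_heatKernel_eq ha hb t]
  rw [integral_const_mul,
    integral_sub_right_eq_self (fun v => exp (-((a + b) / (4 * a * b)) * v ^ 2)), integral_gaussian,
    heatKernel, rpow_neg_one_div_two_eq_inv_sqrt (by positivity),
    rpow_neg_one_div_two_eq_inv_sqrt (by positivity),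
    rpow_neg_one_div_two_eq_inv_sqrt (by positivity)]
  have hab : π / ((a + b) / (4 * a * b)) = (4 * π * a) * (4 * π * b) / (4 * π * (a + b)) := by
    field_simp
  rw [hab, sqrt_div (by positivity), sqrt_mul (x := 4 * π * a) (by positivity)]
  have hA : 0 < √(4 * π * a) := by positivity
  have hB : 0 < √(4 * π * b) := by positivity
  -- otherwise `field_simp` splits the square roots into `√4 * √π * √a`
  generalize √(4 * π * a) = A at *
  generalize √(4 * π * b) = B at *
  field_simp

/-- After `s = y²` the integrand becomes a Gaussian in `m y - |x| / (2 y)`. -/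
theorem integral_Ioi_mul_exp {m : ℝ} (hm : 0 < m) (x : ℝ) :
    ∫ s in Ioi 0, heatKernel s x * exp (-s * m ^ 2) = exp (-m * |x|) / (2 * m) := by
  rw [← integral_comp_rpow_Ioi_of_pos (g := fun s => heatKernel s x * exp (-s * m ^ 2)) two_pos]
  have hpt : ∀ y ∈ Ioi (0:ℝ), ((2:ℝ) * y ^ ((2:ℝ) - 1)) • (heatKernel (y ^ (2:ℝ)) x
      * exp (-y ^ (2:ℝ) * m ^ 2)) = (exp (-m * |x|) / √π) * exp (-(m * y - |x| / 2 / y) ^ 2) := by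
    intro y (hy : 0 < y)
    have hsqrt : √(4 * π * y ^ 2) = 2 * y * √π := by
      rw [show 4 * π * y ^ 2 = (2 * y) ^ 2 * π by ring, sqrt_mul (by positivity),
        sqrt_sq (by positivity)]
    have hexp : -x ^ 2 / (4 * y ^ 2) + -y ^ 2 * m ^ 2
        = -m * |x| + -(m * y - |x| / 2 / y) ^ 2 := by
      rw [← sq_abs x]
      field_simp
      ring
    rw [show (2:ℝ) - 1 = 1 by norm_num, rpow_one, rpow_two, smul_eq_mul, heatKernel,
      rpow_neg_one_div_two_eq_inv_sqrt (by positivity), hsqrt, mul_assoc (2 * y * √π)⁻¹,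
      ← exp_add, hexp, exp_add]
    have : 0 < √π := by positivity
    field_simp
  rw [setIntegral_congr_fun measurableSet_Ioi hpt, integral_const_mul,
    integral_Ioi_exp_neg_sq_mul_sub_div hm (by positivity)]
  have : 0 < √π := by positivity
  field_simp

lemma integrable_mul_heatKernel_mul_exp {a m : ℝ} (ha : 0 < a) (hm : 0 < m) (t : ℝ) :
    Integrable
      (Function.uncurry fun r u => heatKernel a (t - u) * heatKernel r u * exp (-r * m ^ 2))
      ((volume.restrict (Ioi 0)).prod volume) := by
  have hbound : ∀ s ≥ a, ∀ x, ‖heatKernel s x‖ ≤ (4 * π * a) ^ (-(1:ℝ)/2) := fun s hs x => by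
    rw [Real.norm_of_nonneg (nonneg (ha.le.trans hs) x)]
    exact le_rpow_of_le ha hs x
  have hmeas : Measurable (Function.uncurry fun r u =>
      heatKernel a (t - u) * heatKernel r u * exp (-r * m ^ 2)) := by
    unfold heatKernel Function.uncurry; fun_prop
  refine (integrable_prod_iff hmeas.aestronglyMeasurable).mpr ⟨?_, ?_⟩
  · refine ae_restrict_of_forall_mem measurableSet_Ioi fun r (hr : 0 < r) => ?_
    simp only [Function.uncurry_apply_pair]
    exact ((integrable hr).bdd_mul (by unfold heatKernel; fun_prop)
      (ae_of_all _ fun u => hbound a le_rfl (t - u))).mul_const _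
  · have hexp : IntegrableOn (fun r => exp (-r * m ^ 2)) (Ioi 0) := by
      simpa only [neg_mul, mul_comm, mul_neg] using
        exp_neg_integrableOn_Ioi 0 (by positivity : 0 < m ^ 2)
    have hint : IntegrableOn (fun r => heatKernel (r + a) t * exp (-r * m ^ 2)) (Ioi 0) :=
      hexp.bdd_mul (f := fun r => heatKernel (r + a) t) (by unfold heatKernel; fun_prop)
        (ae_restrict_of_forall_mem measurableSet_Ioi fun r (hr : 0 < r) =>
          hbound _ (by linarith) t)
    refine hint.congr_fun (fun r (hr : 0 < r) => ?_) measurableSet_Ioi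
    simp only [Function.uncurry_apply_pair]
    rw [add_comm, ← integral_mul_heatKernel ha hr, ← integral_mul_const]
    refine integral_congr_ae (ae_of_all _ fun u => ?_)
    exact (Real.norm_of_nonneg (mul_nonneg (mul_nonneg (nonneg ha.le _) (nonneg hr.le _))
      (exp_pos _).le)).symm

theorem integral_Ioi_add_mul_exp {a m : ℝ} (ha : 0 < a) (hm : 0 < m) (t : ℝ) :
    ∫ r in Ioi 0, heatKernel (r + a) t * exp (-r * m ^ 2)
      = ∫ u, heatKernel a (t - u) * (exp (-m * |u|) / (2 * m)) :=
  calc ∫ r in Ioi 0, heatKernel (r + a) t * exp (-r * m ^ 2)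
      = ∫ r in Ioi 0, ∫ u, heatKernel a (t - u) * heatKernel r u * exp (-r * m ^ 2) :=
        setIntegral_congr_fun measurableSet_Ioi fun r (hr : 0 < r) => by
          rw [integral_mul_const, integral_mul_heatKernel ha hr, add_comm]
    _ = ∫ u, ∫ r in Ioi 0, heatKernel a (t - u) * heatKernel r u * exp (-r * m ^ 2) :=
        integral_integral_swap (integrable_mul_heatKernel_mul_exp ha hm t)
    _ = ∫ u, heatKernel a (t - u) * (exp (-m * |u|) / (2 * m)) := by
        simp_rw [mul_assoc, integral_const_mul, integral_Ioi_mul_exp hm]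

end heatKernel

/-- The kernel of `e^{-λ(-Δ+m²)} C` in one dimension equals the
heat-smoothed exponential kernel `W_{λ,m}`. -/
theorem stmt_2 (lam m : ℝ) (hlam : 0 < lam) (hm : 0 < m) (t : ℝ)
    (W : ℝ → ℝ)
    (hW : ∀ t : ℝ, W t = ∫ u : ℝ, Real.exp (-(t - u) ^ 2 / (4 * lam) - m * |u|)) :
    ∫ s in Set.Ioi lam,
        (4 * π * s) ^ (-(1:ℝ)/2) * Real.exp (-t ^ 2 / (4 * s) - s * m ^ 2)
      = Real.exp (-lam * m ^ 2) * (4 * π * lam) ^ (-(1:ℝ)/2) * (2 * m)⁻¹ * W t := by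
  have hshift := (measurePreserving_add_right volume lam).setIntegral_preimage_emb
    (measurableEmbedding_addRight lam)
    (fun s => (4 * π * s) ^ (-(1:ℝ)/2) * exp (-t ^ 2 / (4 * s) - s * m ^ 2)) (Ioi lam)
  rw [preimage_add_const_Ioi, sub_self] at hshift
  have hsplit : ∀ r, (4 * π * (r + lam)) ^ (-(1:ℝ)/2)
      * exp (-t ^ 2 / (4 * (r + lam)) - (r + lam) * m ^ 2)
      = exp (-lam * m ^ 2) * (heatKernel (r + lam) t * exp (-r * m ^ 2)) := fun r => by
    rw [heatKernel, show -t ^ 2 / (4 * (r + lam)) - (r + lam) * m ^ 2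
      = -lam * m ^ 2 + (-t ^ 2 / (4 * (r + lam)) + -r * m ^ 2) by ring, exp_add, exp_add]
    ring
  have hmerge : ∀ u, heatKernel lam (t - u) * (exp (-m * |u|) / (2 * m))
      = (4 * π * lam) ^ (-(1:ℝ)/2) * (2 * m)⁻¹ * exp (-(t - u) ^ 2 / (4 * lam) - m * |u|) :=
    fun u => by
      rw [heatKernel, sub_eq_add_neg _ (m * _), exp_add, ← neg_mul]
      ring
  rw [← hshift]
  simp_rw [hsplit]
  rw [integral_const_mul, heatKernel.integral_Ioi_add_mul_exp hlam hm]
  simp_rw [hmerge]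
  rw [integral_const_mul, hW]
  ring
end

section
/- For every $\lambda>0$, $m>0$, and $t\geq 0$, with $D_\lambda(t)=\int_0^\lambda (4\pi s)^{-1/2} e^{-t^2/(4s)-s m^2}\,ds$ and $W_{\lambda,m}(t)=\int_{\mathbb{R}} e^{-(t-u)^2/(4\lambda)-m|u|}\,du$, one has the identity $D_\lambda(0) - 2e^{mt}D_\lambda(t) + e^{2mt}D_\lambda(2t) = -\,e^{-\lambda m^2}(4\pi\lambda)^{-1/2}\,m^{-1}\Big(\tfrac12\big(W_{\lambda,m}(0)+e^{2mt}W_{\lambda,m}(2t)\big) - e^{mt}W_{\lambda,m}(t)\Big)$. (The reflection-positivity form of $D_\lambda$ on the $C$-null vector $f=\delta_0-e^{mt}\delta_t$ reduces, up to a negative constant, to the function $F$.) -/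
/-!
With `Φ x = ∫₀ˣ e^{-v²}` and `p, q = m√s ∓ a/(2√s)`, the function
`e^{-ma} Φ(p) + e^{ma} Φ(q)` is a primitive in `s` of `m s^{-1/2} e^{-a²/(4s) - sm²}`, with
limit `(e^{ma} - e^{-ma}) √π/2` at `s = 0⁺` when `a ≥ 0`. Completing the square on each
half-line, its value at `s = λ` also computes `W_{λ,m}(a)`. Eliminating it gives, for `a ≥ 0`,
`D_λ(a) = e^{-ma}/(2m) - e^{-λm²} (4πλ)^{-1/2} (2m)⁻¹ W_{λ,m}(a)`,
and the free resolvent `e^{-ma}/(2m)` cancels in the combination of `a = 0, t, 2t` with weights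
`1, -2e^{mt}, e^{2mt}`.
-/

open MeasureTheory Real Set Filter Topology

noncomputable def gaussPrimitive (x : ℝ) : ℝ := ∫ v in (0 : ℝ)..x, exp (-v ^ 2)

lemma integrable_exp_neg_sq : Integrable fun v : ℝ => exp (-v ^ 2) := by
  simpa using integrable_exp_neg_mul_sq one_pos

lemma hasDerivAt_gaussPrimitive (x : ℝ) : HasDerivAt gaussPrimitive (exp (-x ^ 2)) x :=
  intervalIntegral.integral_hasDerivAt_right integrable_exp_neg_sq.intervalIntegrable
    ((by fun_prop : Continuous fun v : ℝ => exp (-v ^ 2)).stronglyMeasurableAtFilter _ _)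
    (by fun_prop : Continuous fun v : ℝ => exp (-v ^ 2)).continuousAt

lemma continuous_gaussPrimitive : Continuous gaussPrimitive :=
  continuous_iff_continuousAt.mpr fun x => (hasDerivAt_gaussPrimitive x).continuousAt

@[simp]
lemma gaussPrimitive_zero : gaussPrimitive 0 = 0 := by simp [gaussPrimitive]

lemma gaussPrimitive_neg (x : ℝ) : gaussPrimitive (-x) = -gaussPrimitive x := by
  have h := intervalIntegral.integral_comp_neg (a := 0) (b := x) fun v : ℝ => exp (-v ^ 2)
  simp only [neg_sq, neg_zero] at h
  rw [gaussPrimitive, gaussPrimitive, h, intervalIntegral.integral_symm]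

lemma tendsto_gaussPrimitive_atTop : Tendsto gaussPrimitive atTop (𝓝 (√π / 2)) := by
  have h := intervalIntegral_tendsto_integral_Ioi 0 integrable_exp_neg_sq.integrableOn tendsto_id
  rwa [show ∫ v in Ioi (0 : ℝ), exp (-v ^ 2) = √π / 2 by simpa using integral_gaussian_Ioi 1]
    at h

lemma tendsto_gaussPrimitive_atBot : Tendsto gaussPrimitive atBot (𝓝 (-(√π / 2))) :=
  (tendsto_gaussPrimitive_atTop.comp tendsto_neg_atBot_atTop).neg.congr fun x => by
    simp [gaussPrimitive_neg]

lemma integral_Ioi_exp_neg_sq_div_add {b : ℝ} (hb : 0 < b) (c : ℝ) :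
    ∫ u in Ioi 0, exp (-(u / b + c) ^ 2) = b * (√π / 2 - gaussPrimitive c) := by
  have hderiv (u : ℝ) : HasDerivAt (fun u => b * gaussPrimitive (u / b + c))
      (exp (-(u / b + c) ^ 2)) u := by
    have h := ((hasDerivAt_gaussPrimitive _).comp u
      (((hasDerivAt_id' u).div_const b).add_const c)).const_mul b
    exact h.congr_deriv (by field_simp)
  have hlim : Tendsto (fun u => b * gaussPrimitive (u / b + c)) atTop (𝓝 (b * (√π / 2))) :=
    (tendsto_gaussPrimitive_atTop.comp
      ((tendsto_id.atTop_div_const hb).atTop_add tendsto_const_nhds)).const_mul b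
  rw [integral_Ioi_of_hasDerivAt_of_nonneg (hderiv 0).continuousAt.continuousWithinAt
    (fun u _ => hderiv u) (fun u _ => (exp_pos _).le) hlim]
  simp [mul_sub]

lemma integral_eq_integral_Ioi_add_integral_Ioi_comp_neg {f : ℝ → ℝ} (hf : Integrable f) :
    ∫ x, f x = (∫ x in Ioi 0, f x) + ∫ x in Ioi 0, f (-x) := by
  rw [← intervalIntegral.integral_Iic_add_Ioi (b := 0) hf.integrableOn hf.integrableOn,
    integral_comp_neg_Ioi, neg_zero, add_comm]

lemma intervalIntegral_eq_sub_of_hasDerivAt_of_tendsto_of_nonneg {f f' : ℝ → ℝ} {a b fa : ℝ}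
    (hab : a < b)
    (hderiv : ∀ x ∈ Ioo a b, HasDerivAt f (f' x) x) (hpos : ∀ x ∈ Ioo a b, 0 ≤ f' x)
    (ha : Tendsto f (𝓝[>] a) (𝓝 fa)) (hb : ContinuousAt f b) :
    ∫ x in a..b, f' x = f b - fa := by
  classical
  set F := Function.update f a fa
  have hcont : ContinuousOn F (Icc a b) := by
    rw [continuousOn_update_iff, Icc_sdiff_left]
    refine ⟨fun x hx => ?_, fun _ => ?_⟩
    · rcases eq_or_lt_of_le hx.2 with rfl | hxb
      · exact hb.continuousWithinAt
      · exact (hderiv x ⟨hx.1, hxb⟩).continuousAt.continuousWithinAt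
    · exact ha.mono_left (nhdsWithin_mono _ fun x hx => hx.1)
  have hFderiv : ∀ x ∈ Ioo a b, HasDerivAt F (f' x) x := fun x hx =>
    (hderiv x hx).congr_of_eventuallyEq <| by
      filter_upwards [Ioi_mem_nhds hx.1] with y hy
      exact Function.update_of_ne hy.ne' _ _
  have hint : IntervalIntegrable f' volume a b :=
    (intervalIntegrable_iff_integrableOn_Ioc_of_le hab.le).mpr
      (intervalIntegral.integrableOn_deriv_of_nonneg hcont hFderiv hpos)
  rw [intervalIntegral.integral_eq_sub_of_hasDerivAt_of_le hab.le hcont hFderiv hint]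
  simp [F, hab.ne']

noncomputable def heatPrimitive (m a s : ℝ) : ℝ :=
  exp (-(m * a)) * gaussPrimitive (m * √s - a / (2 * √s))
    + exp (m * a) * gaussPrimitive (m * √s + a / (2 * √s))

lemma hasDerivAt_heatPrimitive (m a : ℝ) {s : ℝ} (hs : 0 < s) :
    HasDerivAt (heatPrimitive m a) (m / √s * exp (-a ^ 2 / (4 * s) - s * m ^ 2)) s := by
  have hsqrt : HasDerivAt (√·) (1 / (2 * √s)) s := hasDerivAt_sqrt hs.ne'
  have hfrac : HasDerivAt (fun s => a / (2 * √s)) (-(a / (4 * s * √s))) s := by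
    have h := (hasDerivAt_const s a).div (hsqrt.const_mul 2) (by positivity)
    refine h.congr_deriv ?_
    field_simp
    rw [sq_sqrt hs.le]
    ring
  have h := (((hasDerivAt_gaussPrimitive _).comp s ((hsqrt.const_mul m).sub hfrac)).const_mul
    (exp (-(m * a)))).add
    (((hasDerivAt_gaussPrimitive _).comp s ((hsqrt.const_mul m).add hfrac)).const_mul
    (exp (m * a)))
  refine h.congr_deriv ?_
  have hp : exp (-(m * a)) * exp (-(m * √s - a / (2 * √s)) ^ 2)
      = exp (-a ^ 2 / (4 * s) - s * m ^ 2) := by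
    rw [← exp_add]
    congr 1
    field_simp
    rw [sq_sqrt hs.le]
    ring
  have hq : exp (m * a) * exp (-(m * √s + a / (2 * √s)) ^ 2)
      = exp (-a ^ 2 / (4 * s) - s * m ^ 2) := by
    rw [← exp_add]
    congr 1
    field_simp
    rw [sq_sqrt hs.le]
    ring
  simp only [Pi.sub_apply, Pi.add_apply]
  rw [← mul_assoc, ← mul_assoc, hp, hq]
  field_simp
  ring

lemma tendsto_heatPrimitive_zero {m a : ℝ} (ha : 0 ≤ a) :
    Tendsto (heatPrimitive m a) (𝓝[>] 0) (𝓝 ((exp (m * a) - exp (-(m * a))) * (√π / 2))) := by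
  have hsqrt : Tendsto (√·) (𝓝[>] 0) (𝓝[>] 0) :=
    tendsto_nhdsWithin_iff.mpr ⟨(continuous_sqrt.tendsto' 0 0 sqrt_zero).mono_left
      nhdsWithin_le_nhds, eventually_nhdsWithin_of_forall fun _ hs => sqrt_pos.mpr hs⟩
  have hlin : Tendsto (fun s => m * √s) (𝓝[>] 0) (𝓝 0) := by
    simpa using (hsqrt.mono_right nhdsWithin_le_nhds).const_mul m
  rcases ha.eq_or_lt with rfl | ha
  · have h := ((continuous_gaussPrimitive.tendsto 0).comp hlin).const_mul 2
    convert h using 2 with s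
    · simp [heatPrimitive, two_mul]
    · simp
  have hpole : Tendsto (fun s => a / (2 * √s)) (𝓝[>] 0) atTop := by
    have h := (tendsto_inv_nhdsGT_zero.comp hsqrt).const_mul_atTop (by positivity : 0 < a / 2)
    refine h.congr fun s => ?_
    simp only [Function.comp_apply]
    field_simp
  have h := ((tendsto_gaussPrimitive_atBot.comp (hlin.add_atBot
    (tendsto_neg_atTop_atBot.comp hpole))).const_mul (exp (-(m * a)))).add
    ((tendsto_gaussPrimitive_atTop.comp (hlin.add_atTop hpole)).const_mul (exp (m * a)))
  convert h using 2
  · simp [heatPrimitive, sub_eq_add_neg]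
  · ring

lemma rpow_neg_one_div_two {x : ℝ} (hx : 0 ≤ x) : x ^ (-(1 : ℝ) / 2) = (√x)⁻¹ := by
  rw [neg_div, rpow_neg hx, sqrt_eq_rpow]

lemma sqrt_four_mul_pi_mul (x : ℝ) : √(4 * π * x) = 2 * √π * √x := by
  rw [sqrt_mul (by positivity), sqrt_mul (by norm_num),
    show (4 : ℝ) = 2 ^ 2 by norm_num, sqrt_sq zero_le_two]

lemma integral_heatKernel_eq_heatPrimitive {m a lam : ℝ} (hm : 0 < m) (ha : 0 ≤ a)
    (hlam : 0 < lam) :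
    ∫ s in (0 : ℝ)..lam, (4 * π * s) ^ (-(1 : ℝ) / 2) * exp (-a ^ 2 / (4 * s) - s * m ^ 2)
      = (2 * √π * m)⁻¹
        * (heatPrimitive m a lam - (exp (m * a) - exp (-(m * a))) * (√π / 2)) := by
  rw [← intervalIntegral_eq_sub_of_hasDerivAt_of_tendsto_of_nonneg hlam
    (fun s hs => hasDerivAt_heatPrimitive m a hs.1) (fun s _ => by positivity)
    (tendsto_heatPrimitive_zero ha) (hasDerivAt_heatPrimitive m a hlam).continuousAt,
    ← intervalIntegral.integral_const_mul]
  refine intervalIntegral.integral_congr fun s hs => ?_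
  have hs_nonneg : 0 ≤ s := (uIcc_of_le hlam.le ▸ hs).1
  -- also at `s = 0`, where both sides vanish through `0 ^ (-1/2) = 0` and `m / √0 = 0`
  simp only [rpow_neg_one_div_two (by positivity : 0 ≤ 4 * π * s), sqrt_four_mul_pi_mul]
  field_simp

lemma integral_gaussian_mul_exp_neg_abs {m lam : ℝ} (hm : 0 ≤ m) (hlam : 0 < lam) (a : ℝ) :
    ∫ u, exp (-(a - u) ^ 2 / (4 * lam) - m * |u|)
      = 2 * √lam * exp (m ^ 2 * lam)
        * ((exp (m * a) + exp (-(m * a))) * (√π / 2) - heatPrimitive m a lam) := by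
  obtain ⟨r, hr, rfl⟩ : ∃ r, 0 < r ∧ lam = r ^ 2 :=
    ⟨√lam, sqrt_pos.mpr hlam, (sq_sqrt hlam.le).symm⟩
  have hint : Integrable fun u => exp (-(a - u) ^ 2 / (4 * r ^ 2) - m * |u|) := by
    refine ((integrable_exp_neg_mul_sq (by positivity : 0 < 1 / (4 * r ^ 2))).comp_sub_right
      a).mono' (by fun_prop) (Eventually.of_forall fun u => ?_)
    rw [norm_of_nonneg (exp_pos _).le, exp_le_exp]
    have : 0 ≤ m * |u| := by positivity
    rw [neg_div, ← neg_sq (a - u), neg_sub]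
    linarith [show (u - a) ^ 2 / (4 * r ^ 2) = 1 / (4 * r ^ 2) * (u - a) ^ 2 by ring]
  have hpos : ∀ u ∈ Ioi (0 : ℝ), exp (-(a - u) ^ 2 / (4 * r ^ 2) - m * |u|)
      = exp (m ^ 2 * r ^ 2 - m * a)
        * exp (-(u / (2 * r) + (m * r - a / (2 * r))) ^ 2) := by
    intro u hu
    rw [abs_of_pos hu, ← exp_add]
    congr 1
    field_simp
    ring
  have hneg : ∀ u ∈ Ioi (0 : ℝ), exp (-(a - -u) ^ 2 / (4 * r ^ 2) - m * |-u|)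
      = exp (m ^ 2 * r ^ 2 + m * a)
        * exp (-(u / (2 * r) + (m * r + a / (2 * r))) ^ 2) := by
    intro u hu
    rw [abs_neg, abs_of_pos hu, ← exp_add]
    congr 1
    field_simp
    ring
  rw [integral_eq_integral_Ioi_add_integral_Ioi_comp_neg hint,
    setIntegral_congr_fun measurableSet_Ioi hpos, setIntegral_congr_fun measurableSet_Ioi hneg,
    integral_const_mul, integral_const_mul, integral_Ioi_exp_neg_sq_div_add (by positivity),
    integral_Ioi_exp_neg_sq_div_add (by positivity), heatPrimitive, sqrt_sq hr.le, exp_sub, exp_add,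
    exp_neg]
  field_simp
  ring

lemma integral_heatKernel_eq_exp_sub_integral_gaussian {m a lam : ℝ} (hm : 0 < m) (ha : 0 ≤ a)
    (hlam : 0 < lam) :
    ∫ s in (0 : ℝ)..lam, (4 * π * s) ^ (-(1 : ℝ) / 2) * exp (-a ^ 2 / (4 * s) - s * m ^ 2)
      = exp (-(m * a)) / (2 * m) - exp (-lam * m ^ 2) * (4 * π * lam) ^ (-(1 : ℝ) / 2) * m⁻¹
        * (1 / 2) * ∫ u, exp (-(a - u) ^ 2 / (4 * lam) - m * |u|) := by
  rw [integral_heatKernel_eq_heatPrimitive hm ha hlam,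
    integral_gaussian_mul_exp_neg_abs hm.le hlam,
    rpow_neg_one_div_two (by positivity), sqrt_four_mul_pi_mul,
    show -lam * m ^ 2 = -(m ^ 2 * lam) by ring, exp_neg (m ^ 2 * lam)]
  field_simp
  ring

/-- The reflection-positivity form of `D_λ` on the `C`-null vector
`f = δ₀ - e^{mt} δ_t` reduces, up to a negative constant, to the function `F`. -/
theorem stmt_3 (lam m : ℝ) (hlam : 0 < lam) (hm : 0 < m) (t : ℝ) (ht : 0 ≤ t)
    (D : ℝ → ℝ)
    (hD : ∀ t : ℝ, D t =
      ∫ s in (0:ℝ)..lam, (4 * π * s) ^ (-(1:ℝ)/2) * Real.exp (-t ^ 2 / (4 * s) - s * m ^ 2))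
    (W : ℝ → ℝ)
    (hW : ∀ t : ℝ, W t = ∫ u : ℝ, Real.exp (-(t - u) ^ 2 / (4 * lam) - m * |u|)) :
    D 0 - 2 * Real.exp (m * t) * D t + Real.exp (2 * m * t) * D (2 * t)
      = -(Real.exp (-lam * m ^ 2) * (4 * π * lam) ^ (-(1:ℝ)/2) * m⁻¹
          * ((1/2) * (W 0 + Real.exp (2 * m * t) * W (2 * t))
              - Real.exp (m * t) * W t)) := by
  have hDW (b : ℝ) (hb : 0 ≤ b) : D b = exp (-(m * b)) / (2 * m)
      - exp (-lam * m ^ 2) * (4 * π * lam) ^ (-(1 : ℝ) / 2) * m⁻¹ * (1 / 2) * W b := by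
    rw [hD, hW, integral_heatKernel_eq_exp_sub_integral_gaussian hm hb hlam]
  rw [hDW 0 le_rfl, hDW t ht, hDW (2 * t) (by positivity), mul_zero, neg_zero, exp_zero,
    show m * (2 * t) = 2 * m * t by ring, exp_neg, exp_neg]
  field_simp
  ring
end
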